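/- Let $h\in(0,1)$, $1<q<\infty$, and for $\alpha\in\mathbb{R}$ let $u_\alpha:[0,1]\to\mathbb{R}$ be the continuous piecewise linear function with $u_\alpha(0)=1$, $u_\alpha(1-h)=\alpha$, $u_\alpha(1)=0$ (linear on $[0,1-h]$ and $[1-h,1]$). If $\alpha^*$ minimizes $\alpha \mapsto \int_0^1 |1-u_\alpha(x)|^q\,dx$, then $\alpha^* > 1$. -/

import Mathlib

open MeasureTheory

/-- Continuous piecewise linear function on the two-element mesh `{(0,1-h),(1-h,1)}`
with nodal values `a` at `0`, `b` at `1-h`, `c` at `1`. -/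
noncomputable def pl2 (h a b c : ℝ) (x : ℝ) : ℝ :=
  if x ≤ 1 - h then a + (b - a) * x / (1 - h)
  else b + (c - b) * (x - (1 - h)) / h

/-!
For `α ≤ 1` the error `|1 - u_α|` dominates `|1 - u_1|` pointwise, because `u_1 ≡ 1` on the
left element and `u_α ≤ u_1 ≤ 1` on the right one; so a minimizer with `α* ≤ 1` would make
`α = 1` optimal as well. But the error is explicit (the odd function `t |t| ^ q / (q + 1)` is a
primitive of `|t| ^ q`), and raising the node to `1 + e` costs `O(e ^ q)` on the left element
while gaining an amount of order `e` on the right one; as `q > 1`, this strictly lowers the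
error for small `e > 0`.
-/

open Filter Topology

lemma integral_zero_abs_rpow_of_nonneg {q t : ℝ} (hq : 0 ≤ q) (ht : 0 ≤ t) :
    ∫ x in (0:ℝ)..t, |x| ^ q = t * |t| ^ q / (q + 1) := by
  have hq1 : q + 1 ≠ 0 := by linarith
  rw [intervalIntegral.integral_congr (g := fun x => x ^ q) fun x hx => by
      rw [Set.uIcc_of_le ht] at hx; simp only [abs_of_nonneg hx.1],
    integral_rpow (Or.inl (by linarith)), Real.zero_rpow hq1, Real.rpow_add_one' ht hq1,
    abs_of_nonneg ht]
  ring

lemma integral_zero_abs_rpow {q : ℝ} (hq : 0 ≤ q) (t : ℝ) :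
    ∫ x in (0:ℝ)..t, |x| ^ q = t * |t| ^ q / (q + 1) := by
  rcases le_total 0 t with ht | ht
  · exact integral_zero_abs_rpow_of_nonneg hq ht
  · have := integral_zero_abs_rpow_of_nonneg hq (neg_nonneg.2 ht)
    rw [← neg_zero, ← intervalIntegral.integral_comp_neg] at this
    simp only [abs_neg] at this
    rw [intervalIntegral.integral_symm, this]
    ring

lemma integral_abs_rpow {q : ℝ} (hq : 0 ≤ q) (a b : ℝ) :
    ∫ x in a..b, |x| ^ q = (b * |b| ^ q - a * |a| ^ q) / (q + 1) := by
  have hint : ∀ c d : ℝ, IntervalIntegrable (fun x => |x| ^ q) volume c d := fun c d =>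
    (continuous_abs.rpow_const fun _ => Or.inr hq).intervalIntegrable c d
  rw [← intervalIntegral.integral_interval_sub_left (hint 0 b) (hint 0 a),
    integral_zero_abs_rpow hq, integral_zero_abs_rpow hq]
  ring

lemma integral_abs_mul_add_rpow {q m : ℝ} (hq : 0 ≤ q) (hm : m ≠ 0) (k a b : ℝ) :
    ∫ x in a..b, |m * x + k| ^ q
      = ((m * b + k) * |m * b + k| ^ q - (m * a + k) * |m * a + k| ^ q) / (m * (q + 1)) := by
  rw [intervalIntegral.integral_comp_mul_add (fun x => |x| ^ q) hm, integral_abs_rpow hq,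
    smul_eq_mul]
  field_simp

lemma pl2_of_le {h a b c x : ℝ} (hx : x ≤ 1 - h) : pl2 h a b c x = a + (b - a) * x / (1 - h) :=
  if_pos hx

lemma pl2_of_ge {h a b c x : ℝ} (hh : h ≠ 1) (hx : 1 - h ≤ x) :
    pl2 h a b c x = b + (c - b) * (x - (1 - h)) / h := by
  rcases hx.eq_or_lt with rfl | hx
  · have : 1 - h ≠ 0 := sub_ne_zero.2 (Ne.symm hh)
    rw [pl2_of_le le_rfl]
    field_simp
    ring
  · exact if_neg (not_le.2 hx)

lemma continuous_pl2 {h : ℝ} (hh : h ≠ 1) (a b c : ℝ) : Continuous (pl2 h a b c) := by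
  refine Continuous.if_le (by fun_prop) (by fun_prop) continuous_id continuous_const ?_
  intro x hx
  rw [← pl2_of_le hx.le, pl2_of_ge hh hx.ge]

lemma intervalIntegrable_abs_one_sub_pl2_rpow {h q : ℝ} (hh : h ≠ 1) (hq : 0 ≤ q)
    (α c d : ℝ) :
    IntervalIntegrable (fun x => |1 - pl2 h 1 α 0 x| ^ q) volume c d :=
  ((continuous_const.sub (continuous_pl2 hh 1 α 0)).abs.rpow_const
    fun _ => Or.inr hq).intervalIntegrable c d

noncomputable def errorLq (h q α : ℝ) : ℝ :=
  ∫ x in (0:ℝ)..1, |1 - pl2 h 1 α 0 x| ^ q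

lemma errorLq_eq_of_ne_zero {h q α : ℝ} (hh0 : 0 < h) (hh1 : h < 1) (hq : 0 ≤ q)
    (hα : α ≠ 0) :
    errorLq h q α
      = ((1 - h) * |α - 1| ^ q + h * (1 - (1 - α) * |1 - α| ^ q) / α) / (q + 1) := by
  have hL : 0 < 1 - h := by linarith
  have left : ∫ x in (0:ℝ)..1 - h, |1 - pl2 h 1 α 0 x| ^ q
      = (1 - h) * |α - 1| ^ q / (q + 1) := by
    rw [intervalIntegral.integral_congr (g := fun x => |(α - 1) / (1 - h)| ^ q * |x| ^ q)
      fun x hx => ?_]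
    · rw [intervalIntegral.integral_const_mul, integral_abs_rpow hq, abs_div,
        Real.div_rpow (abs_nonneg _) (abs_nonneg _), abs_of_pos hL,
        zero_mul, sub_zero]
      have : (1 - h) ^ q ≠ 0 := (Real.rpow_pos_of_pos hL q).ne'
      field_simp
    · rw [Set.uIcc_of_le hL.le] at hx
      simp only
      rw [pl2_of_le hx.2, ← Real.mul_rpow (abs_nonneg _) (abs_nonneg _), ← abs_mul,
        ← abs_neg]
      ring_nf
  have right : ∫ x in 1 - h..1, |1 - pl2 h 1 α 0 x| ^ q
      = h * (1 - (1 - α) * |1 - α| ^ q) / α / (q + 1) := by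
    rw [intervalIntegral.integral_congr (g := fun x => |α / h * x + (1 - α / h)| ^ q)
      fun x hx => ?_]
    · have at_one : α / h * 1 + (1 - α / h) = 1 := by ring
      have at_node : α / h * (1 - h) + (1 - α / h) = 1 - α := by field_simp; ring
      rw [integral_abs_mul_add_rpow hq (div_ne_zero hα hh0.ne'), at_one, at_node, abs_one,
        Real.one_rpow]
      field_simp
    · rw [Set.uIcc_of_le (by linarith : 1 - h ≤ 1)] at hx
      simp only
      rw [pl2_of_ge hh1.ne hx.1]
      congr 2
      field_simp
      ring
  have hint := intervalIntegrable_abs_one_sub_pl2_rpow hh1.ne hq α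
  rw [errorLq, ← intervalIntegral.integral_add_adjacent_intervals (hint 0 (1 - h)) (hint _ 1),
    left, right]
  ring

lemma errorLq_one {h q : ℝ} (hh0 : 0 < h) (hh1 : h < 1) (hq : 0 < q) :
    errorLq h q 1 = h / (q + 1) := by
  rw [errorLq_eq_of_ne_zero hh0 hh1 hq.le one_ne_zero]
  simp [Real.zero_rpow hq.ne']

lemma errorLq_one_add_lt_errorLq_one {h q e : ℝ} (hh0 : 0 < h) (hh1 : h < 1) (hq : 0 < q)
    (he : 0 < e) (hsmall : e ^ q * (1 - h + e) < h * e) :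
    errorLq h q (1 + e) < errorLq h q 1 := by
  have hα : (1 + e) ≠ 0 := by linarith
  rw [errorLq_one hh0 hh1 hq, errorLq_eq_of_ne_zero hh0 hh1 hq.le hα, add_sub_cancel_left,
    show 1 - (1 + e) = -e by ring, abs_neg, abs_of_pos he]
  have hq1 : 0 < q + 1 := by linarith
  rw [div_lt_div_iff_of_pos_right hq1, ← sub_pos]
  have key : h - ((1 - h) * e ^ q + h * (1 - -e * e ^ q) / (1 + e))
      = (h * e - e ^ q * (1 - h + e)) / (1 + e) := by
    field_simp
    ring
  rw [key]
  apply div_pos <;> linarith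

lemma eventually_rpow_mul_add_lt_mul {q h : ℝ} (hq : 1 < q) (hh : 0 < h) (c : ℝ) :
    ∀ᶠ e in 𝓝[>] 0, 0 < e ∧ e ^ q * (c + e) < h * e := by
  have hlim : Tendsto (fun e : ℝ => e ^ (q - 1) * (c + e)) (𝓝 0) (𝓝 0) := by
    have hcont : ContinuousAt (fun e : ℝ => e ^ (q - 1) * (c + e)) 0 :=
      (Real.continuousAt_rpow_const 0 (q - 1) (Or.inr (by linarith))).mul (by fun_prop)
    simpa [Real.zero_rpow (by linarith : q - 1 ≠ 0)] using hcont.tendsto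
  filter_upwards [self_mem_nhdsWithin, nhdsWithin_le_nhds (hlim.eventually_lt_const hh)]
    with e (he : 0 < e) hsmall
  refine ⟨he, ?_⟩
  calc e ^ q * (c + e) = e * (e ^ (q - 1) * (c + e)) := by
        rw [Real.rpow_sub_one he.ne']; field_simp
    _ < e * h := mul_lt_mul_of_pos_left hsmall he
    _ = h * e := mul_comm e h

lemma abs_one_sub_pl2_one_le {h α x : ℝ} (hh0 : 0 < h) (hh1 : h < 1) (hα : α ≤ 1)
    (hx : x ≤ 1) :
    |1 - pl2 h 1 1 0 x| ≤ |1 - pl2 h 1 α 0 x| := by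
  by_cases hxL : x ≤ 1 - h
  · simp [pl2_of_le hxL]
  · rw [pl2_of_ge hh1.ne (le_of_not_ge hxL), pl2_of_ge hh1.ne (le_of_not_ge hxL)]
    have hs : 0 ≤ (1 - x) / h := div_nonneg (by linarith) hh0.le
    have hs1 : (1 - x) / h ≤ 1 := (div_le_one hh0).2 (by linarith)
    have e1 : 1 - (1 + (0 - 1) * (x - (1 - h)) / h) = 1 - (1 - x) / h := by field_simp; ring
    have e2 : 1 - (α + (0 - α) * (x - (1 - h)) / h) = 1 - α * ((1 - x) / h) := by
      field_simp; ring
    rw [e1, e2]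
    exact abs_le_abs_of_nonneg (by linarith) (by nlinarith)

lemma errorLq_one_le {h q α : ℝ} (hh0 : 0 < h) (hh1 : h < 1) (hq : 0 ≤ q) (hα : α ≤ 1) :
    errorLq h q 1 ≤ errorLq h q α := by
  have hint := intervalIntegrable_abs_one_sub_pl2_rpow hh1.ne hq
  exact intervalIntegral.integral_mono_on zero_le_one (hint 1 0 1) (hint α 0 1) fun x hx =>
    Real.rpow_le_rpow (abs_nonneg _) (abs_one_sub_pl2_one_le hh0 hh1 hα hx.2) hq

theorem stmt2 (h q : ℝ) (hh0 : 0 < h) (hh1 : h < 1) (hq : 1 < q) (αstar : ℝ)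
    (hmin : ∀ α : ℝ,
      (∫ x in (0:ℝ)..1, |1 - pl2 h 1 αstar 0 x| ^ q) ≤
        ∫ x in (0:ℝ)..1, |1 - pl2 h 1 α 0 x| ^ q) :
    1 < αstar := by
  have hq0 : 0 < q := zero_lt_one.trans hq
  by_contra! hle
  obtain ⟨e, he, hsmall⟩ := (eventually_rpow_mul_add_lt_mul hq hh0 (1 - h)).exists
  have hgain := errorLq_one_add_lt_errorLq_one hh0 hh1 hq0 he hsmall
  have hloss := errorLq_one_le hh0 hh1 hq0.le hle
  have hopt : errorLq h q αstar ≤ errorLq h q (1 + e) := hmin (1 + e)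
  linarith
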